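/- Let G = {(0,1), (1,0), (1,1), (2,0), (1,1/2)} and let P assign probability p to each of the first four points and 1-4p to the last point, where 0 < p < 1/4. Then H(π₁P) = H(π_∞P) and H(π₀P) = H(π₂P). -/

import Mathlib

open Finset
open scoped Classical

noncomputable def pushEnt (G : Finset (ℝ × ℝ)) (P : ℝ × ℝ → ℝ) (π : ℝ × ℝ → ℝ) : ℝ :=
  -∑ ν ∈ G.image π, (∑ g ∈ G.filter (fun g => π g = ν), P g) *
      Real.log (∑ g ∈ G.filter (fun g => π g = ν), P g)

noncomputable def ent (G : Finset (ℝ × ℝ)) (P : ℝ × ℝ → ℝ) : ℝ :=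
  -∑ g ∈ G, P g * Real.log (P g)

def π₀ : ℝ × ℝ → ℝ := fun x => x.1
def π₁ : ℝ × ℝ → ℝ := fun x => x.1 + x.2
def π₂ : ℝ × ℝ → ℝ := fun x => x.1 + 2 * x.2
def πinf : ℝ × ℝ → ℝ := fun x => x.2

/-!
Each of the four projections splits the five points into three fibres, so each push-forward
entropy is a sum of three values of `negMulLog` at fibre masses. The fibres of `π₁` and `π_∞`
differ as sets, but both consist of two pairs from the first four points and the singleton
`(1, 1/2)`; those of `π₀` and `π₂` are two singletons from the first four points and a triple
containing `(1, 1/2)`. Once the first four points carry equal mass, the masses agree.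
-/

theorem pushEnt_eq_sum_negMulLog (G : Finset (ℝ × ℝ)) (P : ℝ × ℝ → ℝ) (f : ℝ × ℝ → ℝ) :
    pushEnt G P f = ∑ ν ∈ G.image f, Real.negMulLog (∑ g ∈ G with f g = ν, P g) := by
  simp only [pushEnt, Real.negMulLog, neg_mul, sum_neg_distrib]

noncomputable def fivePoints : Finset (ℝ × ℝ) := {(0,1), (1,0), (1,1), (2,0), (1, 1/2)}

theorem pushEnt_fivePoints_π₁ (P : ℝ × ℝ → ℝ) :
    pushEnt fivePoints P π₁ =
      Real.negMulLog (P (0,1) + P (1,0)) + Real.negMulLog (P (1,1) + P (2,0)) +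
        Real.negMulLog (P (1, 1/2)) := by
  rw [pushEnt_eq_sum_negMulLog]
  norm_num [fivePoints, π₁, Prod.ext_iff, sum_filter, sum_insert]
  ac_rfl

theorem pushEnt_fivePoints_πinf (P : ℝ × ℝ → ℝ) :
    pushEnt fivePoints P πinf =
      Real.negMulLog (P (0,1) + P (1,1)) + Real.negMulLog (P (1,0) + P (2,0)) +
        Real.negMulLog (P (1, 1/2)) := by
  rw [pushEnt_eq_sum_negMulLog]
  norm_num [fivePoints, πinf, Prod.ext_iff, sum_filter, sum_insert]
  ac_rfl

theorem pushEnt_fivePoints_π₀ (P : ℝ × ℝ → ℝ) :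
    pushEnt fivePoints P π₀ =
      Real.negMulLog (P (0,1)) + Real.negMulLog (P (1,0) + P (1,1) + P (1, 1/2)) +
        Real.negMulLog (P (2,0)) := by
  rw [pushEnt_eq_sum_negMulLog]
  norm_num [fivePoints, π₀, Prod.ext_iff, sum_filter, sum_insert]
  ac_rfl

theorem pushEnt_fivePoints_π₂ (P : ℝ × ℝ → ℝ) :
    pushEnt fivePoints P π₂ =
      Real.negMulLog (P (1,0)) + Real.negMulLog (P (0,1) + P (2,0) + P (1, 1/2)) +
        Real.negMulLog (P (1,1)) := by
  rw [pushEnt_eq_sum_negMulLog]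
  norm_num [fivePoints, π₂, Prod.ext_iff, sum_filter, sum_insert]
  ac_rfl

theorem five_point_symmetries_general (p : ℝ)
    (P : ℝ × ℝ → ℝ) (hP1 : P (0,1) = p) (hP2 : P (1,0) = p)
    (hP3 : P (1,1) = p) (hP4 : P (2,0) = p) :
    let G : Finset (ℝ × ℝ) := {(0,1), (1,0), (1,1), (2,0), (1, 1/2)}
    pushEnt G P π₁ = pushEnt G P πinf ∧ pushEnt G P π₀ = pushEnt G P π₂ := by
  show pushEnt fivePoints P π₁ = pushEnt fivePoints P πinf ∧
    pushEnt fivePoints P π₀ = pushEnt fivePoints P π₂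
  rw [pushEnt_fivePoints_π₁, pushEnt_fivePoints_πinf, pushEnt_fivePoints_π₀,
    pushEnt_fivePoints_π₂, hP1, hP2, hP3, hP4]
  constructor <;> ring

theorem five_point_symmetries (p : ℝ) (hp : p ∈ Set.Ioo (0 : ℝ) (1/4))
    (P : ℝ × ℝ → ℝ) (hP1 : P (0,1) = p) (hP2 : P (1,0) = p)
    (hP3 : P (1,1) = p) (hP4 : P (2,0) = p) (hP5 : P (1, 1/2) = 1 - 4*p) :
    let G : Finset (ℝ × ℝ) := {(0,1), (1,0), (1,1), (2,0), (1, 1/2)}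
    pushEnt G P π₁ = pushEnt G P πinf ∧ pushEnt G P π₀ = pushEnt G P π₂ :=
  five_point_symmetries_general p P hP1 hP2 hP3 hP4
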